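/- arXiv:2603.04234 — 5 statements merged into one kernel-verified Lean document; each statement's English description precedes it below -/
import Mathlib

section
/- Let S be a finite separated syndrome in the dual-lattice model of the hexagonal colour code. Then every error set E that generates S satisfies |E| ≥ |S|. -/
/-- A check of the dual lattice: a point of `ℤ × ℤ`. -/
abbrev Check : Type := ℤ × ℤ

/-- The upward triangular face at `v`. -/
def upFace (v : Check) : Finset Check := {v, v + (1, 0), v + (1, 1)}

/-- The downward triangular face at `v`. -/
def downFace (v : Check) : Finset Check := {v, v + (0, 1), v + (1, 1)}

/-- A face of the dual lattice of the hexagonal colour code. -/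
def IsFace (f : Finset Check) : Prop := ∃ v : Check, f = upFace v ∨ f = downFace v

/-- An error set: a finite set of faces. -/
def IsErrorSet (E : Finset (Finset Check)) : Prop := ∀ f ∈ E, IsFace f

/-- The syndrome of `E`: the checks lying in an odd number of members of `E`. -/
def syndrome (E : Finset (Finset Check)) : Finset Check :=
  (E.sup id).filter fun v => Odd (E.filter fun f => v ∈ f).card

/-- `E` generates the syndrome `S`. -/
def Generates (E : Finset (Finset Check)) (S : Finset Check) : Prop :=
  IsErrorSet E ∧ syndrome E = S

/-- The colour of a check `(x, y)` is `(x + y) mod 3`. -/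
def colour (v : Check) : ZMod 3 := ((v.1 + v.2 : ℤ) : ZMod 3)

/-- Two checks are adjacent if their difference is one of six lattice vectors. -/
def Adjacent (u v : Check) : Prop :=
  u - v ∈ ({(1, 0), (-1, 0), (0, 1), (0, -1), (1, 1), (-1, -1)} : Finset Check)

/-- A syndrome is separated if it contains no two distinct adjacent checks. -/
def Separated (S : Finset Check) : Prop :=
  ∀ u ∈ S, ∀ v ∈ S, u ≠ v → ¬ Adjacent u v

lemma face_adj {f : Finset Check} (hf : IsFace f) {u v : Check}
    (hu : u ∈ f) (hv : v ∈ f) (hne : u ≠ v) : Adjacent u v := by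
  obtain ⟨w, h | h⟩ := hf <;> subst h <;>
    simp only [upFace, downFace, Finset.mem_insert, Finset.mem_singleton] at hu hv <;>
    rcases hu with rfl | rfl | rfl <;> rcases hv with rfl | rfl | rfl <;>
    first
      | exact absurd rfl hne
      | (simp only [Adjacent, Finset.mem_insert, Finset.mem_singleton, Prod.ext_iff,
            Prod.fst_sub, Prod.snd_sub, Prod.fst_add, Prod.snd_add, Prod.mk.injEq,
            Prod.fst_zero, Prod.snd_zero]
         norm_num)

/-- If `S` is a finite separated syndrome in the dual-lattice model of the
hexagonal colour code, then every error set `E` generating `S` satisfies `|E| ≥ |S|`. -/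
theorem separated_syndrome_card_le_errorSet_card
    (S : Finset Check) (hS : Separated S)
    (E : Finset (Finset Check)) (hE : Generates E S) :
    S.card ≤ E.card := by
  classical
  obtain ⟨hEs, hsyn⟩ := hE
  have hmem : ∀ s : Check, s ∈ S → ∃ f, f ∈ E ∧ s ∈ f := by
    intro s hs
    rw [← hsyn] at hs
    simp only [syndrome, Finset.mem_filter] at hs
    have : (E.filter fun f => s ∈ f).Nonempty := by
      rw [← Finset.card_pos]; exact hs.2.pos
    obtain ⟨f, hf⟩ := this
    simp only [Finset.mem_filter] at hf
    exact ⟨f, hf.1, hf.2⟩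
  choose! g hg using hmem
  refine Finset.card_le_card_of_injOn g (fun s hs => (hg s hs).1) ?_
  intro a ha b hb hab
  by_contra hne
  exact hS a ha b hb hne
    (face_adj (hEs _ (hg a ha).1) (hg a ha).2 (hab ▸ (hg b hb).2) hne)
end

section
/- Let S be a finite separated syndrome in the dual-lattice model of the hexagonal colour code and let E be an exact cover of S. Then every element of S belongs to exactly one face of E, and every face of E contains exactly one element of S. -/
/-- `E` is an exact cover of `S`: `E` generates `S` and `|E| = |S|`. -/
def ExactCover (E : Finset (Finset Check)) (S : Finset Check) : Prop :=
  Generates E S ∧ E.card = S.card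

lemma face_adj_s2 {f : Finset Check} (hf : IsFace f) :
    ∀ u ∈ f, ∀ w ∈ f, u ≠ w → Adjacent u w := by
  obtain ⟨v, hv | hv⟩ := hf <;> subst hv <;> intro u hu w hw hne <;>
    simp only [upFace, downFace, Finset.mem_insert, Finset.mem_singleton] at hu hw <;>
    rcases hu with rfl | rfl | rfl <;> rcases hw with rfl | rfl | rfl <;>
    first
      | exact absurd rfl hne
      | (simp only [Adjacent, Finset.mem_insert, Finset.mem_singleton, Prod.ext_iff,
          Prod.fst_sub, Prod.snd_sub, Prod.fst_add, Prod.snd_add, Prod.mk.injEq]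
         omega)

/-- In an exact cover of a separated syndrome, every defect lies in exactly
one face of the cover, and every face of the cover contains exactly one defect. -/
theorem exactCover_of_separated_unique
    (S : Finset Check) (hS : Separated S)
    (E : Finset (Finset Check)) (hE : ExactCover E S) :
    (∀ v ∈ S, (E.filter fun f => v ∈ f).card = 1) ∧
    (∀ f ∈ E, (S.filter fun v => v ∈ f).card = 1) := by
  obtain ⟨⟨hface, hsyn⟩, hcard⟩ := hE
  have ha1 : ∀ v ∈ S, 1 ≤ (E.filter fun f => v ∈ f).card := by
    intro v hv
    rw [← hsyn] at hv
    have := (Finset.mem_filter.mp hv).2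
    exact this.pos
  have hb1 : ∀ f ∈ E, (S.filter fun v => v ∈ f).card ≤ 1 := by
    intro f hf
    apply Finset.card_le_one.mpr
    intro a ha b hb
    simp only [Finset.mem_filter] at ha hb
    by_contra hab
    exact hS a ha.1 b hb.1 hab (face_adj_s2 (hface f hf) a ha.2 b hb.2 hab)
  have hsum : (∑ v ∈ S, (E.filter fun f => v ∈ f).card)
      = ∑ f ∈ E, (S.filter fun v => v ∈ f).card := by
    simp only [Finset.card_filter]
    rw [Finset.sum_comm]
  have h1 : S.card ≤ ∑ v ∈ S, (E.filter fun f => v ∈ f).card := by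
    calc S.card = ∑ _v ∈ S, 1 := by simp
    _ ≤ _ := Finset.sum_le_sum ha1
  have h2 : (∑ f ∈ E, (S.filter fun v => v ∈ f).card) ≤ E.card := by
    calc _ ≤ ∑ _f ∈ E, 1 := Finset.sum_le_sum hb1
    _ = E.card := by simp
  have heq1 : (∑ v ∈ S, (E.filter fun f => v ∈ f).card) = S.card := by omega
  have heq2 : (∑ f ∈ E, (S.filter fun v => v ∈ f).card) = E.card := by omega
  constructor
  · intro v hv
    have := (Finset.sum_eq_sum_iff_of_le ha1).mp (by simpa using heq1.symm)
    exact (this v hv).symm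
  · intro f hf
    have := (Finset.sum_eq_sum_iff_of_le hb1).mp (by simpa using heq2)
    exact this f hf
end

section
/- For every check v ∈ ℤ × ℤ in the dual-lattice model of the hexagonal colour code, there is no error set E whose syndrome is the single vertex {v}, i.e. no finite set of faces generates a syndrome of cardinality one. -/
lemma colour_add (v w : Check) : colour (v + w) = colour v + colour w := by
  simp only [colour, Prod.fst_add, Prod.snd_add]
  push_cast
  ring

lemma tri (x0 x1 x2 : Check) (h01 : x0 ≠ x1) (h02 : x0 ≠ x2) (h12 : x1 ≠ x2)
    (hc1 : colour x1 = colour x0 + 1) (hc2 : colour x2 = colour x0 + 2) (c : ZMod 3) :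
    (({x0, x1, x2} : Finset Check).filter (fun v => colour v = c)).card = 1 := by
  rw [Finset.card_filter, Finset.sum_insert (by simp [h01, h02]),
    Finset.sum_insert (by simp [h12]), Finset.sum_singleton, hc1, hc2]
  generalize colour x0 = a
  revert a c; decide

lemma face_filter_card (f : Finset Check) (hf : IsFace f) (c : ZMod 3) :
    (f.filter (fun v => colour v = c)).card = 1 := by
  obtain ⟨v, h | h⟩ := hf <;> subst h
  · refine tri _ _ _ ?_ ?_ ?_ ?_ ?_ c
    · intro h; have := congrArg Prod.fst h; simp [Prod.fst_add] at this
    · intro h; have := congrArg Prod.fst h; simp [Prod.fst_add] at this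
    · intro h; have := congrArg Prod.snd h; simp [Prod.snd_add] at this
    · rw [colour_add]; congr 1
    · rw [colour_add]; congr 1
  · refine tri _ _ _ ?_ ?_ ?_ ?_ ?_ c
    · intro h; have := congrArg Prod.snd h; simp [Prod.snd_add] at this
    · intro h; have := congrArg Prod.fst h; simp [Prod.fst_add] at this
    · intro h; have := congrArg Prod.fst h; simp [Prod.fst_add] at this
    · rw [colour_add]; congr 1
    · rw [colour_add]; congr 1

lemma parity (E : Finset (Finset Check)) (hE : IsErrorSet E) (c : ZMod 3) :
    ((syndrome E).filter (fun v => colour v = c)).card % 2 = E.card % 2 := by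
  classical
  set T := E.sup id with hT
  set P : Check → Prop := fun v => colour v = c with hP
  have hsub : ∀ f ∈ E, f ⊆ T := fun f hf => Finset.le_sup (f := id) hf
  have step1 : ∀ f ∈ E, (f.filter P).card
      = ∑ v ∈ T.filter P, if v ∈ f then 1 else 0 := by
    intro f hf
    rw [← Finset.card_filter]
    congr 1
    rw [Finset.filter_comm, Finset.filter_mem_eq_inter,
      Finset.inter_eq_right.mpr (hsub f hf)]
  have key : E.card = ∑ v ∈ T.filter P, (E.filter (fun f => v ∈ f)).card := by
    calc E.card = ∑ f ∈ E, (f.filter P).card := by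
          rw [Finset.sum_congr rfl (fun f hf => face_filter_card f (hE f hf) c)]
          simp
      _ = ∑ f ∈ E, ∑ v ∈ T.filter P, if v ∈ f then 1 else 0 :=
          Finset.sum_congr rfl step1
      _ = ∑ v ∈ T.filter P, ∑ f ∈ E, if v ∈ f then 1 else 0 := Finset.sum_comm
      _ = ∑ v ∈ T.filter P, (E.filter (fun f => v ∈ f)).card := by
          refine Finset.sum_congr rfl fun v _ => ?_
          rw [Finset.card_filter]
  have syn_eq : (syndrome E).filter P
      = (T.filter P).filter (fun v => Odd (E.filter (fun f => v ∈ f)).card) := by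
    rw [syndrome, Finset.filter_comm]
  have step2 : ∀ v ∈ T.filter P,
      (if Odd (E.filter (fun f => v ∈ f)).card then 1 else 0) % 2
        = (E.filter (fun f => v ∈ f)).card % 2 := by
    intro v _
    rcases Nat.even_or_odd (E.filter (fun f => v ∈ f)).card with h | h
    · rw [if_neg (Nat.not_odd_iff_even.mpr h)]
      have := Nat.even_iff.mp h; omega
    · rw [if_pos h]
      have := Nat.odd_iff.mp h; omega
  rw [syn_eq, Finset.card_filter, key, Finset.sum_nat_mod,
    Finset.sum_congr rfl step2, ← Finset.sum_nat_mod]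

lemma main_single (v : Check) : ¬ ∃ E : Finset (Finset Check), Generates E {v} := by
  rintro ⟨E, hE, hsyn⟩
  have h1 := parity E hE (colour v)
  have h2 := parity E hE (colour v + 1)
  rw [hsyn] at h1 h2
  have hne : colour v ≠ colour v + 1 := by
    generalize colour v = a; revert a; decide
  rw [Finset.filter_singleton, if_pos rfl] at h1
  rw [Finset.filter_singleton, if_neg hne] at h2
  simp only [Finset.card_singleton, Finset.card_empty] at h1 h2
  omega

/-- No error set has a syndrome which is a single check; equivalently,
no finite set of faces generates a syndrome of cardinality one. -/
theorem no_singleton_syndrome :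
    (∀ v : Check, ¬ ∃ E : Finset (Finset Check), Generates E {v}) ∧
    (¬ ∃ E : Finset (Finset Check), IsErrorSet E ∧ (syndrome E).card = 1) := by
  refine ⟨main_single, ?_⟩
  rintro ⟨E, hE, hcard⟩
  obtain ⟨v, hv⟩ := Finset.card_eq_one.mp hcard
  exact main_single v ⟨E, hE, hv⟩
end

section
/- Let E be an error set in the dual-lattice model of the hexagonal colour code and let k ∈ {0, 1, 2}. If every check in the syndrome S(E) has colour k (i.e. S(E) contains no defects of the other two colours), then |S(E)| is even. -/
lemma tri_filter (a b d : Check) (s c : ZMod 3) (ha : colour a = s)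
    (hb : colour b = s + 1) (hd : colour d = s + 2) :
    (({a, b, d} : Finset Check).filter (fun u => colour u = c)).card = 1 := by
  have habc : ∀ s c : ZMod 3, c = s ∨ c = s + 1 ∨ c = s + 2 := by decide
  have hne : ∀ s : ZMod 3, s + 1 ≠ s ∧ s + 2 ≠ s ∧ s + 2 ≠ s + 1 ∧ s ≠ s + 1 ∧ s ≠ s + 2 ∧ s + 1 ≠ s + 2 := by decide
  obtain ⟨h1, h2, h3, h4, h5, h6⟩ := hne s
  have hab : a ≠ b := by intro e; rw [e, hb] at ha; exact h1 ha
  have had : a ≠ d := by intro e; rw [e, hd] at ha; exact h2 ha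
  have hbd : b ≠ d := by intro e; rw [e, hd] at hb; exact h3 hb
  rcases habc s c with rfl | rfl | rfl <;>
    simp [Finset.filter_insert, Finset.filter_singleton, ha, hb, hd, h1, h2, h3, h4, h5, h6, hab, had, hbd]

lemma face_filter (f : Finset Check) (hf : IsFace f) (c : ZMod 3) :
    (f.filter (fun u => colour u = c)).card = 1 := by
  obtain ⟨v, hv | hv⟩ := hf <;> subst hv
  · exact tri_filter _ _ _ (colour v) c rfl
      (by simp [colour, Prod.fst_add, Prod.snd_add]; ring) (by simp [colour]; push_cast; ring)
  · exact tri_filter _ _ _ (colour v) c rfl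
      (by simp [colour]; push_cast; ring) (by simp [colour]; push_cast; ring)

lemma key (E : Finset (Finset Check)) (hE : IsErrorSet E) (c : ZMod 3) :
    Even ((syndrome E).filter (fun v => colour v = c)).card ↔ Even E.card := by
  set V := (E.sup id).filter (fun v => colour v = c) with hV
  have hsum : ∑ v ∈ V, (E.filter fun f => v ∈ f).card = E.card := by
    have : ∀ v, (E.filter fun f => v ∈ f).card = ∑ f ∈ E, if v ∈ f then 1 else 0 := by
      intro v; rw [Finset.card_filter]
    simp_rw [this]
    rw [Finset.sum_comm]
    have : ∀ f ∈ E, (∑ v ∈ V, if v ∈ f then 1 else 0) = 1 := by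
      intro f hf
      have hVf : V.filter (fun v => v ∈ f) = f.filter (fun u => colour u = c) := by
        have hsub : f ⊆ E.sup id := Finset.le_sup (f := id) hf
        ext u
        simp only [hV, Finset.mem_filter]
        constructor
        · rintro ⟨⟨_, hc⟩, hu⟩; exact ⟨hu, hc⟩
        · rintro ⟨hu, hc⟩; exact ⟨⟨hsub hu, hc⟩, hu⟩
      rw [← Finset.card_filter, hVf, face_filter f (hE f hf) c]
    rw [Finset.sum_congr rfl this, Finset.sum_const, smul_eq_mul, mul_one]
  have hfe : (syndrome E).filter (fun v => colour v = c)
      = V.filter (fun v => Odd (E.filter fun f => v ∈ f).card) := by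
    rw [syndrome, Finset.filter_comm]
  rw [hfe, ← hsum, Finset.even_sum_iff_even_card_odd]

/-- If every check in the syndrome of an error set `E` has the same colour
`k`, then the syndrome has even cardinality. -/
theorem syndrome_monochromatic_even
    (E : Finset (Finset Check)) (hE : IsErrorSet E) (k : ZMod 3)
    (h : ∀ v ∈ syndrome E, colour v = k) :
    Even (syndrome E).card := by
  have hne : ∀ k : ZMod 3, k ≠ k + 1 := by decide
  have hk1 : (syndrome E).filter (fun v => colour v = k + 1) = ∅ := by
    rw [Finset.filter_eq_empty_iff]
    intro v hv
    rw [h v hv]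
    exact hne k
  have hEeven : Even E.card := by
    rw [← key E hE (k + 1), hk1]
    exact Even.zero
  have := (key E hE k).mpr hEeven
  rwa [Finset.filter_true_of_mem h] at this
end

section
/- For every check u ∈ ℤ × ℤ and every vector w ∈ {(2,1), (1,2), (−1,1), (−2,−1), (−1,−2), (1,−1)}, the syndrome {u, u + w} (a pair of checks of the same colour) is generated by an error set of size 2 (a matched pair of faces sharing an edge), and is not generated by any error set of size at most 1; hence the minimum cardinality of an error set generating {u, u + w} is exactly 2. -/
lemma syndrome_single (f : Finset Check) : syndrome {f} = f := by
  ext v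
  simp only [syndrome, Finset.sup_singleton, id, Finset.mem_filter,
    Finset.filter_singleton]
  by_cases hv : v ∈ f <;> simp [hv, Nat.odd_iff]

lemma syndrome_pair (f g : Finset Check) (h : f ≠ g) :
    syndrome {f, g} = symmDiff f g := by
  ext v
  have hsup : ({f, g} : Finset (Finset Check)).sup id = f ∪ g := by
    simp [Finset.sup_insert, Finset.sup_singleton]
  simp only [syndrome, hsup, Finset.mem_filter, Finset.mem_union, Finset.mem_symmDiff]
  rw [Finset.filter_insert, Finset.filter_singleton]
  by_cases hf : v ∈ f <;> by_cases hg : v ∈ g <;>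
    simp [hf, hg, h, Finset.card_insert_of_notMem, Nat.odd_iff]

lemma face_card {f : Finset Check} (h : IsFace f) : f.card = 3 := by
  obtain ⟨⟨a, b⟩, h | h⟩ := h <;> subst h
  · rw [upFace, Finset.card_insert_of_notMem, Finset.card_insert_of_notMem,
      Finset.card_singleton] <;> simp [Prod.ext_iff, Prod.mk_add_mk] <;> omega
  · rw [downFace, Finset.card_insert_of_notMem, Finset.card_insert_of_notMem,
      Finset.card_singleton] <;> simp [Prod.ext_iff, Prod.mk_add_mk] <;> omega

lemma gen_two {f g : Finset Check} {S : Finset Check}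
    (hf : IsFace f) (hg : IsFace g) (hne : f ≠ g) (hS : symmDiff f g = S) :
    Generates {f, g} S ∧ ({f, g} : Finset (Finset Check)).card = 2 := by
  refine ⟨⟨?_, by rw [syndrome_pair f g hne, hS]⟩, ?_⟩
  · intro x hx
    rcases Finset.mem_insert.mp hx with h | h
    · exact h ▸ hf
    · exact (Finset.mem_singleton.mp h) ▸ hg
  · rw [Finset.card_insert_of_notMem (by simpa using hne), Finset.card_singleton]

lemma genA (a b : ℤ) :
    Generates {upFace (a, b), downFace ((a, b) + (1, 0))} {(a, b), (a, b) + (2, 1)} ∧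
      ({upFace (a, b), downFace ((a, b) + (1, 0))} : Finset (Finset Check)).card = 2 := by
  refine gen_two ⟨_, Or.inl rfl⟩ ⟨_, Or.inr rfl⟩ ?_ ?_
  · intro h
    have : ((a, b) : Check) ∈ downFace ((a, b) + (1, 0)) := by
      rw [← h]; simp [upFace]
    simp [downFace, Prod.ext_iff, Prod.mk_add_mk] at this
  · ext ⟨x, y⟩
    simp [upFace, downFace, Finset.mem_symmDiff, Prod.ext_iff, Prod.mk_add_mk]
    omega

lemma genB (a b : ℤ) :
    Generates {downFace (a, b), upFace ((a, b) + (0, 1))} {(a, b), (a, b) + (1, 2)} ∧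
      ({downFace (a, b), upFace ((a, b) + (0, 1))} : Finset (Finset Check)).card = 2 := by
  refine gen_two ⟨_, Or.inr rfl⟩ ⟨_, Or.inl rfl⟩ ?_ ?_
  · intro h
    have : ((a, b) : Check) ∈ upFace ((a, b) + (0, 1)) := by
      rw [← h]; simp [downFace]
    simp [upFace, Prod.ext_iff, Prod.mk_add_mk] at this
  · ext ⟨x, y⟩
    simp [upFace, downFace, Finset.mem_symmDiff, Prod.ext_iff, Prod.mk_add_mk]
    omega

lemma genC (a b : ℤ) :
    Generates {upFace (a, b), downFace (a, b)} {(a, b) + (1, 0), (a, b) + (0, 1)} ∧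
      ({upFace (a, b), downFace (a, b)} : Finset (Finset Check)).card = 2 := by
  refine gen_two ⟨_, Or.inl rfl⟩ ⟨_, Or.inr rfl⟩ ?_ ?_
  · intro h
    have : ((a, b) + (1, 0) : Check) ∈ downFace (a, b) := by
      rw [← h]; simp [upFace]
    simp [downFace, Prod.ext_iff, Prod.mk_add_mk] at this
  · ext ⟨x, y⟩
    simp [upFace, downFace, Finset.mem_symmDiff, Prod.ext_iff, Prod.mk_add_mk]
    omega

/-- For every check `u` and every vector `w` in the given list, the
two-defect syndrome `{u, u + w}` is generated by an error set of size 2, is not generated by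
any error set of size at most 1, and hence the minimum size of a generating error set is
exactly 2. -/
theorem matched_pair_min_weight
    (u w : Check)
    (hw : w ∈ ({(2, 1), (1, 2), (-1, 1), (-2, -1), (-1, -2), (1, -1)} : Finset Check)) :
    (∃ E : Finset (Finset Check), Generates E {u, u + w} ∧ E.card = 2) ∧
    (¬ ∃ E : Finset (Finset Check), Generates E {u, u + w} ∧ E.card ≤ 1) ∧
    IsLeast {n : ℕ | ∃ E : Finset (Finset Check), Generates E {u, u + w} ∧ E.card = n} 2 := by
  obtain ⟨a, b⟩ := u
  have hw0 : w ≠ 0 := by fin_cases hw <;> decide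
  have hne : ((a, b) : Check) ≠ (a, b) + w := by
    intro h
    exact hw0 (left_eq_add.mp h)
  have hcard2 : ({((a, b) : Check), (a, b) + w} : Finset Check).card = 2 := by
    rw [Finset.card_insert_of_notMem (by simpa using hne), Finset.card_singleton]
  have hpos : ∃ E : Finset (Finset Check),
      Generates E {((a, b) : Check), (a, b) + w} ∧ E.card = 2 := by
    fin_cases hw
    · exact ⟨_, genA a b⟩
    · exact ⟨_, genB a b⟩
    · refine ⟨_, ⟨(genC (a - 1) b).1.1, ?_⟩, (genC (a - 1) b).2⟩
      rw [(genC (a - 1) b).1.2]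
      ext ⟨x, y⟩
      simp [Prod.ext_iff, Prod.mk_add_mk]
      omega
    · refine ⟨_, ⟨(genA (a - 2) (b - 1)).1.1, ?_⟩, (genA (a - 2) (b - 1)).2⟩
      rw [(genA (a - 2) (b - 1)).1.2]
      ext ⟨x, y⟩
      simp [Prod.ext_iff, Prod.mk_add_mk]
      omega
    · refine ⟨_, ⟨(genB (a - 1) (b - 2)).1.1, ?_⟩, (genB (a - 1) (b - 2)).2⟩
      rw [(genB (a - 1) (b - 2)).1.2]
      ext ⟨x, y⟩
      simp [Prod.ext_iff, Prod.mk_add_mk]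
      omega
    · refine ⟨_, ⟨(genC a (b - 1)).1.1, ?_⟩, (genC a (b - 1)).2⟩
      rw [(genC a (b - 1)).1.2]
      ext ⟨x, y⟩
      simp [Prod.ext_iff, Prod.mk_add_mk]
      omega
  have hneg : ¬ ∃ E : Finset (Finset Check),
      Generates E {((a, b) : Check), (a, b) + w} ∧ E.card ≤ 1 := by
    rintro ⟨E, ⟨hE, hS⟩, hc⟩
    rcases Nat.le_one_iff_eq_zero_or_eq_one.mp hc with h0 | h1
    · rw [Finset.card_eq_zero.mp h0] at hS
      have : (2 : ℕ) = 0 := by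
        rw [← hcard2, ← hS]; simp [syndrome]
      exact two_ne_zero this
    · obtain ⟨f, rfl⟩ := Finset.card_eq_one.mp h1
      rw [syndrome_single] at hS
      have h3 : f.card = 3 := face_card (hE f (by simp))
      rw [hS, hcard2] at h3
      exact absurd h3 (by norm_num)
  refine ⟨hpos, hneg, ⟨hpos.choose, hpos.choose_spec⟩, ?_⟩
  rintro n ⟨E, hgen, hcard⟩
  by_contra hlt
  exact hneg ⟨E, hgen, by omega⟩
end
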